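/- For every integer d ≥ 2 and real ε with 0 < ε < 1/4, it holds that N(ε,d) ≥ (log₂ d)/(8ε), where N(ε,d) is the minimal number of points in [0,1]^d achieving dispersion at most ε. -/

import Mathlib

/-- The dispersion of a set of points `X ⊆ [0,1]^d`: the supremum of volumes of
open axis-parallel boxes in `[0,1]^d` avoiding `X`. -/
noncomputable def disp {d : ℕ} (X : Set (Fin d → ℝ)) : ℝ :=
  sSup {v | ∃ a b : Fin d → ℝ, (∀ i, 0 ≤ a i ∧ a i < b i ∧ b i ≤ 1) ∧
    (∀ x ∈ X, ∃ i, x i ∉ Set.Ioo (a i) (b i)) ∧ v = ∏ i, (b i - a i)}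

/-- The minimal dispersion of an `n`-point subset of `[0,1]^d`. -/
noncomputable def dispStar (n d : ℕ) : ℝ :=
  sInf {v | ∃ X : Finset (Fin d → ℝ),
    (∀ x ∈ X, ∀ i, x i ∈ Set.Icc (0 : ℝ) 1) ∧ X.card = n ∧ v = disp (X : Set (Fin d → ℝ))}

/-- `N(ε,d)`: the minimal number of points of a subset of `[0,1]^d` with dispersion `≤ ε`. -/
noncomputable def Nfun (ε : ℝ) (d : ℕ) : ℕ :=
  sInf {n | ∃ X : Finset (Fin d → ℝ),
    (∀ x ∈ X, ∀ i, x i ∈ Set.Icc (0 : ℝ) 1) ∧ X.card = n ∧ disp (X : Set (Fin d → ℝ)) ≤ ε}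

/-!
If the dispersion of `X ⊆ [0,1]^d` is at most `ε`, cut the cube along the first coordinate into
`s = ⌊1/(4ε)⌋` open slabs of width `1/s ≥ 4ε`. Each slab contains at least `log₂ d` points of `X`:
otherwise the `d - 1` other coordinates outnumber the `2^(n-1)` patterns, up to complement, of the
indicators `[x_j > 1/2]` over the `n` points of the slab, so two coordinates `j ≠ j'` carry equal or
complementary patterns. Then a rectangle in the `(j, j')`-plane of area `> 1/4` misses the
projections of those points, and its product with the slab is an empty box of volume `> ε`.
Summing over the `s ≥ 1/(8ε)` slabs gives `#X ≥ log₂ d / (8ε)`.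
-/

open Finset

lemma prod_sub_le_disp {d : ℕ} {X : Set (Fin d → ℝ)} {a b : Fin d → ℝ}
    (hab : ∀ i, 0 ≤ a i ∧ a i < b i ∧ b i ≤ 1)
    (hX : ∀ x ∈ X, ∃ i, x i ∉ Set.Ioo (a i) (b i)) :
    ∏ i, (b i - a i) ≤ disp X := by
  refine le_csSup ⟨1, ?_⟩ ⟨a, b, hab, hX, rfl⟩
  rintro _ ⟨a', b', hab', -, rfl⟩
  exact prod_le_one (fun i _ => by linarith [hab' i]) (fun i _ => by linarith [hab' i])

lemma exists_forall_mem_Ioo_of_disp_lt {d : ℕ} {X : Set (Fin d → ℝ)} {a b : Fin d → ℝ}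
    (hab : ∀ i, 0 ≤ a i ∧ a i < b i ∧ b i ≤ 1) (h : disp X < ∏ i, (b i - a i)) :
    ∃ x ∈ X, ∀ i, x i ∈ Set.Ioo (a i) (b i) := by
  by_contra! hX
  exact h.not_ge (prod_sub_le_disp hab hX)

lemma prod_le_apply_of_le_one {ι : Type*} [Fintype ι] {f : ι → ℝ} (h0 : ∀ i, 0 ≤ f i)
    (h1 : ∀ i, f i ≤ 1) (i : ι) : ∏ j, f j ≤ f i := by
  simpa using prod_le_prod_of_subset_of_le_one (subset_univ {i}) (fun j _ => h0 j)
    (fun j _ _ => h1 j)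

lemma exists_nat_div_mem_Ioo {N : ℕ} (hN : 0 < N) {a b : ℝ} (ha : 0 ≤ a) (hb : b ≤ 1)
    (hab : 1 / N < b - a) : ∃ k ∈ range (N + 1), (k / N : ℝ) ∈ Set.Ioo a b := by
  have hN' : (0 : ℝ) < N := by exact_mod_cast hN
  have hfloor_le : (⌊a * N⌋₊ : ℝ) ≤ a * N := Nat.floor_le (by positivity)
  have hlt_floor : a * N < ⌊a * N⌋₊ + 1 := Nat.lt_floor_add_one _
  have hk : (((⌊a * N⌋₊ + 1 : ℕ) : ℝ) / N) ∈ Set.Ioo a b := by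
    push_cast
    rw [Set.mem_Ioo, lt_div_iff₀ hN', div_lt_iff₀ hN']
    rw [div_lt_iff₀ hN'] at hab
    constructor <;> nlinarith
  refine ⟨_, mem_range.mpr ?_, hk⟩
  have : ((⌊a * N⌋₊ + 1 : ℕ) : ℝ) < N + 1 := by
    have := (div_lt_one hN').mp (hk.2.trans_le hb)
    linarith
  exact_mod_cast this

noncomputable def unitGrid (d N : ℕ) : Finset (Fin d → ℝ) :=
  Fintype.piFinset fun _ => (range (N + 1)).image fun k : ℕ => (k / N : ℝ)

lemma apply_mem_Icc_of_mem_unitGrid {d N : ℕ} {x : Fin d → ℝ} (hx : x ∈ unitGrid d N)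
    (i : Fin d) : x i ∈ Set.Icc (0 : ℝ) 1 := by
  obtain ⟨k, hk, hxk⟩ := mem_image.mp (Fintype.mem_piFinset.mp hx i)
  rw [← hxk]
  refine ⟨by positivity, div_le_one_of_le₀ ?_ (by positivity)⟩
  exact_mod_cast Nat.lt_succ_iff.mp (mem_range.mp hk)

lemma disp_unitGrid_le (d : ℕ) {N : ℕ} (hN : 0 < N) :
    disp (unitGrid d N : Set (Fin d → ℝ)) ≤ 1 / N := by
  refine Real.sSup_le ?_ (by positivity)
  rintro _ ⟨a, b, hab, havoid, rfl⟩
  by_contra! hvol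
  have hside : ∀ i, ∃ k ∈ range (N + 1), (k / N : ℝ) ∈ Set.Ioo (a i) (b i) := fun i =>
    exists_nat_div_mem_Ioo hN (hab i).1 (hab i).2.2 <| hvol.trans_le <|
      prod_le_apply_of_le_one (fun j => by linarith [hab j]) (fun j => by linarith [hab j]) i
  choose k hk hmem using hside
  obtain ⟨i, hi⟩ := havoid (fun i => k i / N) <| Fintype.mem_piFinset.mpr fun i =>
    mem_image_of_mem _ (hk i)
  exact hi (hmem i)

lemma exists_card_eq_Nfun_of_disp_le (d : ℕ) {ε : ℝ} (hε : 0 < ε) :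
    ∃ X : Finset (Fin d → ℝ), X.card = Nfun ε d ∧ disp (X : Set (Fin d → ℝ)) ≤ ε := by
  have hN : 0 < ⌈1 / ε⌉₊ := Nat.ceil_pos.mpr (by positivity)
  have hgrid : disp (unitGrid d ⌈1 / ε⌉₊ : Set (Fin d → ℝ)) ≤ ε :=
    (disp_unitGrid_le d hN).trans <| (one_div_le (by positivity) hε).mpr (Nat.le_ceil _)
  obtain ⟨X, -, hcard, hX⟩ : Nfun ε d ∈ _ :=
    Nat.sInf_mem ⟨_, _, fun _ hx => apply_mem_Icc_of_mem_unitGrid hx, rfl, hgrid⟩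
  exact ⟨X, hcard, hX⟩

lemma Finset.exists_mem_Ioc_forall_lt_imp_le {α β : Type*} [LinearOrder β] (S : Finset α)
    (f : α → β) {a b : β} (hab : a < b) :
    ∃ c ∈ Set.Ioc a b, ∀ x ∈ S, a < f x → c ≤ f x := by
  classical
  set T := insert b ({x ∈ S | a < f x}.image f)
  refine ⟨T.min' (insert_nonempty _ _), ⟨?_, T.min'_le _ (mem_insert_self _ _)⟩,
    fun x hx hax => T.min'_le _ (mem_insert_of_mem (mem_image_of_mem _ (by simp [hx, hax])))⟩
  rw [lt_min'_iff]
  intro y hy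
  simp only [T, mem_insert, mem_image, mem_filter] at hy
  obtain rfl | ⟨x, ⟨-, hx⟩, rfl⟩ := hy
  exacts [hab, hx]

lemma exists_box_of_two_coords {D : ℕ} {Y : Set (Fin D → ℝ)} {j j' : Fin D} (hjj' : j ≠ j')
    {a₁ b₁ a₂ b₂ : ℝ} (h₁ : 0 ≤ a₁ ∧ a₁ < b₁ ∧ b₁ ≤ 1) (h₂ : 0 ≤ a₂ ∧ a₂ < b₂ ∧ b₂ ≤ 1)
    (hY : ∀ p ∈ Y, p j ∉ Set.Ioo a₁ b₁ ∨ p j' ∉ Set.Ioo a₂ b₂) :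
    ∃ a b : Fin D → ℝ, (∀ i, 0 ≤ a i ∧ a i < b i ∧ b i ≤ 1) ∧
      (∀ p ∈ Y, ∃ i, p i ∉ Set.Ioo (a i) (b i)) ∧
      ∏ i, (b i - a i) = (b₁ - a₁) * (b₂ - a₂) := by
  set a : Fin D → ℝ := fun i => if i = j then a₁ else if i = j' then a₂ else 0
  set b : Fin D → ℝ := fun i => if i = j then b₁ else if i = j' then b₂ else 1
  refine ⟨a, b, fun i => ?_, fun p hp => ?_, ?_⟩
  · by_cases hij : i = j
    · simpa [a, b, hij] using h₁
    by_cases hij' : i = j'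
    · subst hij'
      simpa [a, b, hjj'.symm] using h₂
    simp [a, b, hij, hij']
  · rcases hY p hp with h | h
    exacts [⟨j, by simpa [a, b] using h⟩, ⟨j', by simpa [a, b, hjj'.symm] using h⟩]
  · rw [← prod_subset (subset_univ {j, j'}) fun i _ hi => by simp_all [a, b], prod_pair hjj']
    simp [a, b, hjj'.symm]

lemma exists_ne_forall_iff_or_forall_iff_not {ι α : Type*} [Fintype ι] (P : ι → α → Prop)
    {Y : Finset α} (hY : Y.Nonempty) (hcard : 2 ^ #Y < 2 * Fintype.card ι) :
    ∃ j j', j ≠ j' ∧ ((∀ p ∈ Y, P j p ↔ P j' p) ∨ (∀ p ∈ Y, P j p ↔ ¬ P j' p)) := by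
  classical
  obtain ⟨y₀, hy₀⟩ := hY
  have hlt : Fintype.card (Y.erase y₀ → Prop) < Fintype.card ι := by
    rw [Fintype.card_fun, Fintype.card_prop, Fintype.card_coe, card_erase_of_mem hy₀]
    have : 2 ^ #Y = 2 * 2 ^ (#Y - 1) := by
      rw [← pow_succ']
      congr
      have := card_pos.mpr ⟨y₀, hy₀⟩
      omega
    omega
  -- Patterns are read relative to `y₀`, which identifies each pattern with its complement.
  obtain ⟨j, j', hne, heq⟩ := Fintype.exists_ne_map_eq_of_card_lt
    (fun j (p : Y.erase y₀) => (P j p ↔ P j y₀)) hlt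
  have key : ∀ p ∈ Y, p ≠ y₀ → ((P j p ↔ P j y₀) ↔ (P j' p ↔ P j' y₀)) := fun p hp hp₀ =>
    Iff.of_eq (congrFun heq ⟨p, mem_erase.mpr ⟨hp₀, hp⟩⟩)
  refine ⟨j, j', hne, ?_⟩
  by_cases h₀ : P j y₀ ↔ P j' y₀
  · refine Or.inl fun p hp => ?_
    by_cases hp₀ : p = y₀
    · exact hp₀ ▸ h₀
    · have := key p hp hp₀; tauto
  · refine Or.inr fun p hp => ?_
    by_cases hp₀ : p = y₀
    · subst hp₀; tauto
    · have := key p hp hp₀; tauto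

theorem exists_box_avoiding_of_two_pow_card_lt {D : ℕ} (Y : Finset (Fin D → ℝ))
    (hY : 2 ^ #Y < 2 * D) :
    ∃ a b : Fin D → ℝ, (∀ i, 0 ≤ a i ∧ a i < b i ∧ b i ≤ 1) ∧
      (∀ p ∈ Y, ∃ i, p i ∉ Set.Ioo (a i) (b i)) ∧ 1 / 4 < ∏ i, (b i - a i) := by
  rcases Y.eq_empty_or_nonempty with rfl | hne
  · exact ⟨0, 1, fun _ => by norm_num, by simp, by norm_num⟩
  obtain ⟨j, j', hjj', hpat⟩ :=
    exists_ne_forall_iff_or_forall_iff_not (fun j p => (1 / 2 : ℝ) < p j) hne (by simpa using hY)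
  obtain ⟨c, ⟨hc, hc1⟩, hgap⟩ := Y.exists_mem_Ioc_forall_lt_imp_le (· j) one_half_lt_one
  obtain ⟨c', ⟨hc', hc1'⟩, hgap'⟩ := Y.exists_mem_Ioc_forall_lt_imp_le (· j') one_half_lt_one
  have hcut : ∀ p ∈ Y, 1 / 2 < p j → p j ∉ Set.Ioo 0 c := fun p hp h hmem =>
    (hgap p hp h).not_gt hmem.2
  rcases hpat with hsame | hcompl
  · obtain ⟨a, b, hab, hYab, hvol⟩ := exists_box_of_two_coords (Y := Y) hjj'
      ⟨le_rfl, by linarith, hc1⟩ ⟨one_half_pos.le, one_half_lt_one, le_rfl⟩ fun p hp => by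
        by_cases h : 1 / 2 < p j
        · exact Or.inl (hcut p hp h)
        · exact Or.inr fun hmem => h ((hsame p hp).mpr hmem.1)
    exact ⟨a, b, hab, hYab, by rw [hvol]; linarith⟩
  · obtain ⟨a, b, hab, hYab, hvol⟩ := exists_box_of_two_coords (Y := Y) hjj'
      ⟨le_rfl, by linarith, hc1⟩ ⟨le_rfl, by linarith, hc1'⟩ fun p hp => by
        by_cases h : 1 / 2 < p j
        · exact Or.inl (hcut p hp h)
        · exact Or.inr fun hmem =>
            (hgap' p hp (not_not.mp (mt (hcompl p hp).mpr h))).not_gt hmem.2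
    exact ⟨a, b, hab, hYab, by rw [hvol]; nlinarith⟩

theorem two_mul_le_two_pow_card_filter_of_disp_le {D : ℕ} {X : Finset (Fin (D + 1) → ℝ)}
    {ε α β : ℝ} (hX : disp (X : Set (Fin (D + 1) → ℝ)) ≤ ε) (hα : 0 ≤ α) (hαβ : α < β)
    (hβ : β ≤ 1) (hε : 4 * ε ≤ β - α) :
    2 * D ≤ 2 ^ #{p ∈ X | p 0 ∈ Set.Ioo α β} := by
  by_contra! hS
  obtain ⟨a, b, hab, hYab, hvol⟩ := exists_box_avoiding_of_two_pow_card_lt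
    ({p ∈ X | p 0 ∈ Set.Ioo α β}.image Fin.tail)
    ((Nat.pow_le_pow_right two_pos card_image_le).trans_lt hS)
  have hcons : ∀ i, 0 ≤ (Fin.cons α a : Fin (D + 1) → ℝ) i ∧
      (Fin.cons α a : Fin (D + 1) → ℝ) i < (Fin.cons β b : Fin (D + 1) → ℝ) i ∧
      (Fin.cons β b : Fin (D + 1) → ℝ) i ≤ 1 :=
    Fin.cases ⟨hα, hαβ, hβ⟩ hab
  have hdisp : disp (X : Set (Fin (D + 1) → ℝ)) <
      ∏ i, ((Fin.cons β b : Fin (D + 1) → ℝ) i - (Fin.cons α a : Fin (D + 1) → ℝ) i) := by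
    rw [Fin.prod_univ_succ]
    simp only [Fin.cons_zero, Fin.cons_succ]
    nlinarith
  obtain ⟨p, hpX, hp⟩ := exists_forall_mem_Ioo_of_disp_lt hcons hdisp
  obtain ⟨i, hi⟩ := hYab (Fin.tail p) (mem_image_of_mem _ (mem_filter.mpr ⟨hpX, hp 0⟩))
  exact hi (hp i.succ)

lemma sum_card_filter_mem_Ioo_le {α : Type*} (X : Finset α) (f : α → ℝ) (s : ℕ) :
    ∑ t ∈ range s, #{x ∈ X | f x ∈ Set.Ioo (t / s : ℝ) ((t + 1) / s)} ≤ #X := by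
  calc ∑ t ∈ range s, #{x ∈ X | f x ∈ Set.Ioo (t / s : ℝ) ((t + 1) / s)}
      ≤ ∑ t ∈ range s, #{x ∈ X | ⌊s * f x⌋₊ = t} := by
        refine sum_le_sum fun t ht => card_le_card (monotone_filter_right _ fun x _ hx => ?_)
        have hs : (0 : ℝ) < s := by exact_mod_cast (Nat.zero_le t).trans_lt (mem_range.mp ht)
        rw [Set.mem_Ioo, div_lt_iff₀' hs, lt_div_iff₀' hs] at hx
        exact (Nat.floor_eq_iff (by linarith)).mpr ⟨hx.1.le, hx.2⟩
    _ = #{x ∈ X | ⌊s * f x⌋₊ ∈ range s} := sum_card_fiberwise_eq_card_filter _ _ _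
    _ ≤ #X := card_filter_le _ _

lemma logb_two_add_one_le_of_two_mul_le_two_pow {D n : ℕ} (h : 2 * D ≤ 2 ^ n) :
    Real.logb 2 (D + 1) ≤ n := by
  rw [Real.logb_le_iff_le_rpow one_lt_two (by positivity), Real.rpow_natCast]
  have := Nat.one_le_two_pow (n := n)
  exact_mod_cast (by omega : D + 1 ≤ 2 ^ n)

theorem logb_div_le_card_of_disp_le {D : ℕ} {X : Finset (Fin (D + 1) → ℝ)} {ε : ℝ}
    (hε : 0 < ε) (hε' : ε ≤ 1 / 4) (hX : disp (X : Set (Fin (D + 1) → ℝ)) ≤ ε) :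
    Real.logb 2 (D + 1) / (8 * ε) ≤ #X := by
  set s := ⌊1 / (4 * ε)⌋₊
  have hs_le : (s : ℝ) ≤ 1 / (4 * ε) := Nat.floor_le (by positivity)
  have hs_gt : 1 / (4 * ε) < s + 1 := Nat.lt_floor_add_one _
  have hs_one : (1 : ℝ) ≤ s := by
    exact_mod_cast Nat.le_floor (by rw [Nat.cast_one, le_div_iff₀ (by positivity)]; linarith)
  have hs_pos : (0 : ℝ) < s := by linarith
  have hslab : ∀ t ∈ range s,
      Real.logb 2 (D + 1) ≤ #{p ∈ X | p 0 ∈ Set.Ioo (t / s : ℝ) ((t + 1) / s)} := by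
    intro t ht
    have ht' : (t : ℝ) + 1 ≤ s := by exact_mod_cast mem_range.mp ht
    refine logb_two_add_one_le_of_two_mul_le_two_pow <|
      two_mul_le_two_pow_card_filter_of_disp_le hX (by positivity)
        (div_lt_div_of_pos_right (lt_add_one _) hs_pos) ((div_le_one hs_pos).mpr ht') ?_
    rw [← sub_div, add_sub_cancel_left, le_div_iff₀ hs_pos]
    rw [le_div_iff₀ (by positivity)] at hs_le
    linarith
  have hlog : 0 ≤ Real.logb 2 (D + 1) := Real.logb_nonneg one_lt_two (by simp)
  have hs8 : 1 / (8 * ε) ≤ s := by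
    rw [div_le_iff₀ (by positivity)]
    rw [div_lt_iff₀ (by positivity)] at hs_gt
    nlinarith
  calc Real.logb 2 (D + 1) / (8 * ε) = Real.logb 2 (D + 1) * (1 / (8 * ε)) := by ring
    _ ≤ Real.logb 2 (D + 1) * s := mul_le_mul_of_nonneg_left hs8 hlog
    _ = ∑ _t ∈ range s, Real.logb 2 (D + 1) := by simp [mul_comm]
    _ ≤ ∑ t ∈ range s, (#{p ∈ X | p 0 ∈ Set.Ioo (t / s : ℝ) ((t + 1) / s)} : ℝ) :=
        sum_le_sum hslab
    _ ≤ #X := by exact_mod_cast sum_card_filter_mem_Ioo_le X (· 0) s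

theorem AHR_lower_bound_general (d : ℕ) (ε : ℝ) (hε1 : 0 < ε) (hε2 : ε < 1 / 4) :
    (Nfun ε d : ℝ) ≥ Real.logb 2 d / (8 * ε) := by
  obtain ⟨X, hcard, hX⟩ := exists_card_eq_Nfun_of_disp_le d hε1
  rw [← hcard]
  cases d with
  | zero => simp
  | succ D => exact_mod_cast logb_div_le_card_of_disp_le hε1 hε2.le hX

theorem AHR_lower_bound (d : ℕ) (hd : 2 ≤ d) (ε : ℝ) (hε1 : 0 < ε) (hε2 : ε < 1 / 4) :
    (Nfun ε d : ℝ) ≥ Real.logb 2 d / (8 * ε) :=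
  AHR_lower_bound_general d ε hε1 hε2
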